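/- In the group G_k = ⟨g, h ∣ (h⁻¹g)^k⟩ with k ≥ 2, the right multiplication action of G_k on the set of (g,h)-weak Sierpiński subsets is free and has exactly k−1 orbits. -/

import Mathlib

def sierpRels (k : ℕ) : Set (FreeGroup Bool) :=
  {((FreeGroup.of false)⁻¹ * FreeGroup.of true) ^ k}

/-- The group G_k = ⟨g, h ∣ (h⁻¹g)^k⟩. -/
abbrev Gk (k : ℕ) := PresentedGroup (sierpRels k)

/-- The set of (g,h)-weak Sierpiński subsets of G_k. -/
def wSSets (k : ℕ) : Set (Set (Gk k)) :=
  {E | ∃ a b, a ∈ E ∧ b ∈ E ∧ a ≠ b ∧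
    (PresentedGroup.of true * ·) '' E = E \ {a} ∧
    (PresentedGroup.of false * ·) '' E = E \ {b}}

/-!
A weak Sierpiński set `E` determines its exceptional points, since `E \ {a} = g • E` recovers
`a`. Conversely `(a, b)` determines `E`: if `E` and `E'` share them, `E \ E'` is invariant under
`g` and `h`, hence under the whole group, yet misses `a`, so it is empty. Right translation by `x`
moves the points to `(a x, b x)`; this gives freeness and makes `a b⁻¹` a complete orbit
invariant. With `t = h⁻¹ g` of order `k`, the orbit of `g⁻¹ b ∈ E` under `t⁻¹` must hit
`h⁻¹ a` before reaching `h⁻¹ b ∉ E`, which forces `a b⁻¹ = g tⁿ g⁻¹` with `0 < n < k`.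

Each of these `k - 1` values occurs. In normal forms for `G_k = ⟨g⟩ ∗ ⟨t⟩`, let `E` consist of
the elements whose normal form is empty, ends in a power of `g`, or ends in `gᵐ tᶜ` with
`n ≤ c < k` when `m > 0` and `n < c < k` otherwise. Left multiplication by `g⁻¹` or `h⁻¹ = t g⁻¹`
only changes the last block of a word with at most one block, and inspecting those shows that
`E` is a weak Sierpiński set with exceptional points `(g tⁿ, g)`.
-/

open Pointwise

theorem Set.eq_of_diff_singleton_eq {α : Type*} {s : Set α} {x y : α} (hy : y ∈ s)
    (h : s \ {x} = s \ {y}) : x = y := by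
  by_contra hxy
  have : y ∈ s \ {x} := ⟨hy, Ne.symm hxy⟩
  rw [h] at this
  exact this.2 rfl

theorem ZMod.natCast_ne_zero_of_pos_of_lt {k n : ℕ} (hn : 0 < n) (hnk : n < k) :
    (n : ZMod k) ≠ 0 := by
  rw [Ne, ZMod.natCast_eq_zero_iff]
  exact Nat.not_dvd_of_pos_of_lt hn hnk

theorem Set.smul_image_mul_right {G : Type*} [Group G] (y x : G) (S : Set G) :
    y • ((· * x) '' S) = (· * x) '' (y • S) := by
  simp only [← Set.image_smul, Set.image_image, smul_eq_mul, mul_assoc]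

structure IsWeakSierpinski {G : Type*} [Group G] (g h : G) (E : Set G) (a b : G) : Prop where
  left_mem : a ∈ E
  right_mem : b ∈ E
  left_ne_right : a ≠ b
  smul_left : g • E = E \ {a}
  smul_right : h • E = E \ {b}

namespace IsWeakSierpinski

variable {G : Type*} [Group G] {g h : G} {E E' : Set G} {a b a' b' : G}

theorem image_mul_right (hE : IsWeakSierpinski g h E a b) (x : G) :
    IsWeakSierpinski g h ((· * x) '' E) (a * x) (b * x) where
  left_mem := Set.mem_image_of_mem _ hE.left_mem
  right_mem := Set.mem_image_of_mem _ hE.right_mem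
  left_ne_right := mt mul_right_cancel hE.left_ne_right
  smul_left := by
    rw [Set.smul_image_mul_right, hE.smul_left, Set.image_sdiff (mul_left_injective x),
      Set.image_singleton]
  smul_right := by
    rw [Set.smul_image_mul_right, hE.smul_right, Set.image_sdiff (mul_left_injective x),
      Set.image_singleton]

theorem left_unique (hE : IsWeakSierpinski g h E a b) (hE' : IsWeakSierpinski g h E a' b') :
    a = a' :=
  Set.eq_of_diff_singleton_eq hE'.left_mem (by rw [← hE.smul_left, hE'.smul_left])

theorem right_unique (hE : IsWeakSierpinski g h E a b) (hE' : IsWeakSierpinski g h E a' b') :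
    b = b' :=
  Set.eq_of_diff_singleton_eq hE'.right_mem (by rw [← hE.smul_right, hE'.smul_right])

theorem eq_one_of_image_mul_right_eq (hE : IsWeakSierpinski g h E a b) {x : G}
    (hx : (· * x) '' E = E) : x = 1 :=
  mul_eq_left.mp (left_unique (hx ▸ hE.image_mul_right x) hE)

theorem mul_inv_eq_of_image_mul_right (hE : IsWeakSierpinski g h E a b)
    (hE' : IsWeakSierpinski g h E' a' b') {x : G} (hx : E' = (· * x) '' E) :
    a' * b'⁻¹ = a * b⁻¹ := by
  subst hx
  rw [← left_unique (hE.image_mul_right x) hE', ← right_unique (hE.image_mul_right x) hE']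
  group

lemma smul_diff_eq (hg : g • E = E \ {a}) (hg' : g • E' = E' \ {a}) (ha : a ∈ E') :
    g • (E \ E') = E \ E' := by
  rw [Set.smul_set_sdiff, hg, hg']
  ext x
  by_cases hxa : x = a <;> simp [hxa, ha]

theorem eq_of_closure_eq_top (hgh : Subgroup.closure {g, h} = ⊤)
    (hE : IsWeakSierpinski g h E a b) (hE' : IsWeakSierpinski g h E' a b) : E = E' := by
  suffices key : ∀ {E E' : Set G}, IsWeakSierpinski g h E a b → IsWeakSierpinski g h E' a b →
      E ⊆ E' from (key hE hE').antisymm (key hE' hE)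
  intro E E' hE hE' d hd
  by_contra hd'
  have hstab : Subgroup.closure {g, h} ≤ MulAction.stabilizer G (E \ E') := by
    rw [Subgroup.closure_le, Set.insert_subset_iff, Set.singleton_subset_iff]
    exact ⟨smul_diff_eq hE.smul_left hE'.smul_left hE'.left_mem,
      smul_diff_eq hE.smul_right hE'.smul_right hE'.right_mem⟩
  have hfix : (a * d⁻¹) • (E \ E') = E \ E' := hstab (hgh ▸ Subgroup.mem_top _)
  have ha : a ∈ (a * d⁻¹) • (E \ E') := ⟨d, ⟨hd, hd'⟩, by simp⟩
  exact (hfix ▸ ha).2 hE'.left_mem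

theorem eq_image_mul_right_of_mul_inv_eq (hgh : Subgroup.closure {g, h} = ⊤)
    (hE : IsWeakSierpinski g h E a b) (hE' : IsWeakSierpinski g h E' a' b')
    (hab : a * b⁻¹ = a' * b'⁻¹) : E' = (· * (b⁻¹ * b')) '' E := by
  have hE'' := hE.image_mul_right (b⁻¹ * b')
  rw [← mul_assoc, hab, inv_mul_cancel_right, mul_inv_cancel_left] at hE''
  exact eq_of_closure_eq_top hgh hE' hE''

theorem exists_mul_inv_eq_conj_pow {k : ℕ} (hk : 0 < k) (ht : (h⁻¹ * g) ^ k = 1)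
    (hE : IsWeakSierpinski g h E a b) :
    ∃ n, 0 < n ∧ n < k ∧ a * b⁻¹ = g * (h⁻¹ * g) ^ n * g⁻¹ := by
  set t := h⁻¹ * g
  have hh : h = g * t⁻¹ := by simp [t]
  have hc : g⁻¹ * b ∈ E := by
    have : b ∈ g • E := by rw [hE.smul_left]; exact ⟨hE.right_mem, hE.left_ne_right.symm⟩
    simpa [Set.mem_smul_set_iff_inv_smul_mem] using this
  have hc' : t * (g⁻¹ * b) ∉ E := by
    intro hmem
    have : b ∈ h • E := Set.mem_smul_set_iff_inv_smul_mem.mpr (by simpa [t, mul_assoc] using hmem)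
    rw [hE.smul_right] at this
    exact this.2 rfl
  have hstep : ∀ x ∈ E, h * x ≠ a → t⁻¹ * x ∈ E := by
    intro x hx hxa
    have : h * x ∈ h • E := Set.smul_mem_smul_set hx
    rw [hE.smul_right] at this
    have : h * x ∈ g • E := by rw [hE.smul_left]; exact ⟨this.1, hxa⟩
    simpa [Set.mem_smul_set_iff_inv_smul_mem, hh, mul_assoc] using this
  -- `t⁻¹ ^ (k - 1) * (g⁻¹ * b) = h⁻¹ * b ∉ E`, so the walk from `g⁻¹ * b` along `hstep`
  -- must stop before `k - 1` steps.
  obtain ⟨i, hi, hia⟩ : ∃ i, i + 1 < k ∧ h * (t⁻¹ ^ i * (g⁻¹ * b)) = a := by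
    by_contra! hne
    have hchain : ∀ i < k, t⁻¹ ^ i * (g⁻¹ * b) ∈ E := by
      intro i
      induction i with
      | zero => exact fun _ => by simpa using hc
      | succ i ih =>
        intro hi
        rw [pow_succ', mul_assoc]
        exact hstep _ (ih (by omega)) (hne i hi)
    have hlast : t⁻¹ ^ (k - 1) = t := by
      rw [inv_pow]
      exact inv_eq_of_mul_eq_one_right (by rw [← pow_succ, Nat.sub_add_cancel hk, ht])
    exact hc' (hlast ▸ hchain (k - 1) (by omega))
  have hpow : t⁻¹ ^ (i + 1) = t ^ (k - (i + 1)) := by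
    rw [inv_pow]
    exact inv_eq_of_mul_eq_one_right (by rw [← pow_add, Nat.add_sub_cancel' hi.le, ht])
  refine ⟨k - (i + 1), by omega, by omega, ?_⟩
  rw [← hpow, ← hia, hh, pow_succ']
  group

end IsWeakSierpinski

namespace Gk

variable (k : ℕ)

def g : Gk k := PresentedGroup.of true

def h : Gk k := PresentedGroup.of false

def t : Gk k := (h k)⁻¹ * g k

theorem t_pow_eq_one : t k ^ k = 1 := by
  have := PresentedGroup.one_of_mem (rels := sierpRels k) rfl
  rwa [map_pow, map_mul, map_inv] at this

theorem closure_g_h : Subgroup.closure {g k, h k} = ⊤ := by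
  rw [Set.pair_comm, ← PresentedGroup.closure_range_of (sierpRels k), Bool.range_eq]
  rfl

variable {k} in
theorem mem_wSSets_iff {E : Set (Gk k)} :
    E ∈ wSSets k ↔ ∃ a b, IsWeakSierpinski (g k) (h k) E a b :=
  ⟨fun ⟨a, b, ha, hb, hab, hg, hh⟩ => ⟨a, b, ha, hb, hab, hg, hh⟩,
    fun ⟨a, b, hE⟩ => ⟨a, b, hE.1, hE.2, hE.3, hE.4, hE.5⟩⟩

/- `[(m₁, c₁), …, (m_r, c_r)]` stands for `g^m₁ t^c₁ ⋯ g^m_r t^c_r`; it is a normal form when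
only `m₁` and `c_r` may vanish, and not both if `r = 1`. -/
def IsNormalTail : List (ℤ × ZMod k) → Prop
  | [] => True
  | (m, c) :: l => m ≠ 0 ∧ (l ≠ [] → c ≠ 0) ∧ IsNormalTail l

def IsNormal : List (ℤ × ZMod k) → Prop
  | [] => True
  | (m, c) :: l => (m = 0 → c ≠ 0) ∧ (l ≠ [] → c ≠ 0) ∧ IsNormalTail k l

variable {k}

def gMul (a : ℤ) : List (ℤ × ZMod k) → List (ℤ × ZMod k)
  | [] => if a = 0 then [] else [(a, 0)]
  | (m, c) :: l => if a + m = 0 then (if c = 0 then l else (0, c) :: l) else (a + m, c) :: l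

def tMul (b : ZMod k) : List (ℤ × ZMod k) → List (ℤ × ZMod k)
  | [] => if b = 0 then [] else [(0, b)]
  | (m, c) :: l =>
    if m = 0 then (if b + c = 0 then l else (0, b + c) :: l)
    else if b = 0 then (m, c) :: l else (0, b) :: (m, c) :: l

theorem IsNormalTail.isNormal {l : List (ℤ × ZMod k)} (hl : IsNormalTail k l) : IsNormal k l := by
  cases l with
  | nil => trivial
  | cons x l => exact ⟨fun h0 => absurd h0 hl.1, hl.2⟩

theorem isNormal_gMul (a : ℤ) {l : List (ℤ × ZMod k)} (hl : IsNormal k l) :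
    IsNormal k (gMul a l) := by
  match l, hl with
  | [], _ => simp only [gMul]; split_ifs <;> simp_all [IsNormal, IsNormalTail]
  | (m, c) :: l, ⟨h1, h2, h3⟩ =>
    simp only [gMul]
    split_ifs <;> first | exact h3.isNormal | exact ⟨by simp_all, h2, h3⟩

theorem isNormal_tMul (b : ZMod k) {l : List (ℤ × ZMod k)} (hl : IsNormal k l) :
    IsNormal k (tMul b l) := by
  match l, hl with
  | [], _ => simp only [tMul]; split_ifs <;> simp_all [IsNormal, IsNormalTail]
  | (m, c) :: l, ⟨h1, h2, h3⟩ =>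
    simp only [tMul]
    split_ifs <;> first | exact h3.isNormal | exact ⟨h1, h2, h3⟩ | simp_all [IsNormal, IsNormalTail]

theorem gMul_gMul (a b : ℤ) {l : List (ℤ × ZMod k)} (hl : IsNormal k l) :
    gMul a (gMul b l) = gMul (a + b) l := by
  match l, hl with
  | [], _ => simp only [gMul]; split_ifs <;> simp_all
  | [(m, c)], _ => simp only [gMul]; split_ifs <;> simp_all [add_assoc]
  | (m, c) :: y :: l, ⟨_, hc, _⟩ =>
    simp only [gMul]; split_ifs <;> simp_all [add_assoc]

theorem tMul_tMul (a b : ZMod k) {l : List (ℤ × ZMod k)} (hl : IsNormal k l) :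
    tMul a (tMul b l) = tMul (a + b) l := by
  match l, hl with
  | [], _ => simp only [tMul]; split_ifs <;> simp_all
  | [(m, c)], _ => simp only [tMul]; split_ifs <;> simp_all [add_assoc]
  | (m, c) :: (m', c') :: l, ⟨_, _, hm', _⟩ =>
    simp only [tMul]; split_ifs <;> simp_all [add_assoc]

theorem gMul_zero {l : List (ℤ × ZMod k)} (hl : IsNormal k l) : gMul 0 l = l := by
  match l, hl with
  | [], _ => rfl
  | (m, c) :: l, ⟨h1, _, _⟩ => simp only [gMul]; split_ifs <;> simp_all

theorem tMul_zero {l : List (ℤ × ZMod k)} (hl : IsNormal k l) : tMul 0 l = l := by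
  match l, hl with
  | [], _ => simp [tMul]
  | (m, c) :: l, ⟨h1, _, _⟩ => simp only [tMul]; split_ifs <;> simp_all

variable (k) in
def NormalWord := {l : List (ℤ × ZMod k) // IsNormal k l}

def gPerm (a : ℤ) : Equiv.Perm (NormalWord k) where
  toFun w := ⟨gMul a w.1, isNormal_gMul a w.2⟩
  invFun w := ⟨gMul (-a) w.1, isNormal_gMul (-a) w.2⟩
  left_inv w := Subtype.ext <| by simp only [gMul_gMul _ _ w.2, neg_add_cancel, gMul_zero w.2]
  right_inv w := Subtype.ext <| by simp only [gMul_gMul _ _ w.2, add_neg_cancel, gMul_zero w.2]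

def tPerm (b : ZMod k) : Equiv.Perm (NormalWord k) where
  toFun w := ⟨tMul b w.1, isNormal_tMul b w.2⟩
  invFun w := ⟨tMul (-b) w.1, isNormal_tMul (-b) w.2⟩
  left_inv w := Subtype.ext <| by simp only [tMul_tMul _ _ w.2, neg_add_cancel, tMul_zero w.2]
  right_inv w := Subtype.ext <| by simp only [tMul_tMul _ _ w.2, add_neg_cancel, tMul_zero w.2]

@[simp]
theorem gPerm_apply_coe (a : ℤ) (w : NormalWord k) : (gPerm a w).1 = gMul a w.1 := rfl

@[simp]
theorem tPerm_apply_coe (b : ZMod k) (w : NormalWord k) : (tPerm b w).1 = tMul b w.1 := rfl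

theorem tPerm_add (a b : ZMod k) : tPerm (a + b) = tPerm a * tPerm b :=
  Equiv.ext fun w => Subtype.ext (tMul_tMul a b w.2).symm

theorem tPerm_zero : tPerm (0 : ZMod k) = 1 :=
  Equiv.ext fun w => Subtype.ext (tMul_zero w.2)

theorem tPerm_neg (b : ZMod k) : tPerm (-b) = (tPerm b)⁻¹ :=
  eq_inv_of_mul_eq_one_left (by rw [← tPerm_add, neg_add_cancel, tPerm_zero])

theorem tPerm_one_pow (n : ℕ) : tPerm (1 : ZMod k) ^ n = tPerm (n : ZMod k) := by
  induction n with
  | zero => rw [pow_zero, Nat.cast_zero, tPerm_zero]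
  | succ n ih => rw [pow_succ', ih, ← tPerm_add, Nat.cast_succ, add_comm]

theorem tPerm_one_pow_eq_one : tPerm (1 : ZMod k) ^ k = 1 := by
  rw [tPerm_one_pow, ZMod.natCast_self, tPerm_zero]

variable (k) in
def toPerm : Gk k →* Equiv.Perm (NormalWord k) :=
  PresentedGroup.toGroup (f := fun x => if x then gPerm 1 else gPerm 1 * (tPerm 1)⁻¹) <| by
    rintro _ rfl
    simp [tPerm_one_pow_eq_one]

theorem toPerm_g : toPerm k (g k) = gPerm 1 := PresentedGroup.toGroup.of _

theorem toPerm_h : toPerm k (h k) = gPerm 1 * (tPerm 1)⁻¹ := PresentedGroup.toGroup.of _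

theorem toPerm_t : toPerm k (t k) = tPerm 1 := by
  rw [t, map_mul, map_inv, toPerm_g, toPerm_h, mul_inv_rev, inv_inv, inv_mul_cancel_right]

def NormalWord.nil : NormalWord k := ⟨[], by simp [IsNormal]⟩

-- van der Waerden's trick: `eval_normalForm` shows that the orbit map of `nil` is injective.
variable (k) in
def normalForm (v : Gk k) : NormalWord k := toPerm k v .nil

theorem normalForm_mul (x v : Gk k) : normalForm k (x * v) = toPerm k x (normalForm k v) := by
  rw [normalForm, map_mul]
  rfl

def tPow (c : ZMod k) : Gk k := t k ^ c.val

variable (k) in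
def eval (l : List (ℤ × ZMod k)) : Gk k := (l.map fun p => g k ^ p.1 * tPow p.2).prod

@[simp]
theorem eval_nil : eval k [] = 1 := rfl

@[simp]
theorem eval_cons (m : ℤ) (c : ZMod k) (l : List (ℤ × ZMod k)) :
    eval k ((m, c) :: l) = g k ^ m * tPow c * eval k l := rfl

@[simp]
theorem tPow_zero : tPow (0 : ZMod k) = 1 := by
  rw [tPow, ZMod.val_zero, pow_zero]

theorem tPow_one : tPow (1 : ZMod k) = t k := by
  rw [tPow, ZMod.val_one_eq_one_mod, ← pow_eq_pow_mod 1 (t_pow_eq_one k), pow_one]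

theorem eval_gMul (a : ℤ) (l : List (ℤ × ZMod k)) : eval k (gMul a l) = g k ^ a * eval k l := by
  match l with
  | [] => simp only [gMul]; split_ifs <;> simp_all [tPow]
  | (m, c) :: l =>
    simp only [gMul]
    split_ifs with ham hc
    · obtain rfl : m = -a := by omega
      simp [hc]
    · obtain rfl : m = -a := by omega
      simp [mul_assoc]
    · simp [zpow_add, mul_assoc]

section Eval

variable [NeZero k]

theorem tPow_add (b c : ZMod k) : tPow (b + c) = tPow b * tPow c := by
  rw [tPow, tPow, tPow, ZMod.val_add, ← pow_eq_pow_mod _ (t_pow_eq_one k), pow_add]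

theorem tPow_neg_one : tPow (-1 : ZMod k) = (t k)⁻¹ :=
  eq_inv_of_mul_eq_one_left <| by
    rw [← tPow_one, ← tPow_add, neg_add_cancel, tPow_zero]

theorem eval_tMul (b : ZMod k) (l : List (ℤ × ZMod k)) : eval k (tMul b l) = tPow b * eval k l := by
  match l with
  | [] => simp only [tMul]; split_ifs <;> simp_all [tPow]
  | (m, c) :: l =>
    simp only [tMul]
    split_ifs with hm hbc hb <;> try subst hm
    · simp [← mul_assoc, ← tPow_add, hbc]
    · simp [tPow_add, mul_assoc]
    · simp [hb]
    · simp [mul_assoc]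

theorem eval_toPerm (v : Gk k) (w : NormalWord k) :
    eval k (toPerm k v w).1 = v * eval k w.1 := by
  have hv : v ∈ Subgroup.closure {g k, h k} := closure_g_h k ▸ Subgroup.mem_top v
  induction hv using Subgroup.closure_induction generalizing w with
  | mem x hx =>
    rcases hx with rfl | rfl
    · rw [toPerm_g, gPerm_apply_coe, eval_gMul 1 w.1, zpow_one]
    · rw [toPerm_h, ← tPerm_neg, Equiv.Perm.mul_apply, gPerm_apply_coe,
        eval_gMul 1 (tPerm (-1) w).1, tPerm_apply_coe, eval_tMul _ w.1, tPow_neg_one, t]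
      group
  | one => rw [map_one, Equiv.Perm.one_apply, one_mul]
  | mul x y _ _ ihx ihy => rw [map_mul, Equiv.Perm.mul_apply, ihx, ihy, mul_assoc]
  | inv x _ ihx =>
    rw [eq_inv_mul_iff_mul_eq, ← ihx, map_inv, ← Equiv.Perm.mul_apply, mul_inv_cancel,
      Equiv.Perm.one_apply]

theorem eval_normalForm (v : Gk k) : eval k (normalForm k v).1 = v := by
  rw [normalForm, eval_toPerm, NormalWord.nil, eval_nil, mul_one]

theorem normalForm_injective : Function.Injective (normalForm k) :=
  Function.LeftInverse.injective (g := fun w : NormalWord k => eval k w.1) eval_normalForm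

end Eval

theorem normalForm_one : (normalForm k 1).1 = [] := rfl

theorem normalForm_t_pow (n : ℕ) : (normalForm k (t k ^ n)).1 = tMul (n : ZMod k) [] := by
  rw [normalForm, map_pow, toPerm_t, tPerm_one_pow]
  rfl

theorem orderOf_t [NeZero k] : orderOf (t k) = k := by
  refine (orderOf_eq_iff (Nat.pos_of_neZero k)).2 ⟨t_pow_eq_one k, fun n hnk hn ht => ?_⟩
  have := congrArg (fun v => (normalForm k v).1) ht
  simp [normalForm_t_pow, normalForm_one, tMul, ZMod.natCast_ne_zero_of_pos_of_lt hn hnk] at this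

def TailCond (n : ℕ) : List (ℤ × ZMod k) → Prop
  | [] => True
  | [(m, c)] => c = 0 ∨ if 0 < m then n ≤ c.val else n < c.val
  | _ :: y :: l => TailCond n (y :: l)

theorem tailCond_cons_cons (n : ℕ) (x y : ℤ × ZMod k) (l : List (ℤ × ZMod k)) :
    TailCond n (x :: y :: l) ↔ TailCond n (y :: l) := Iff.rfl

theorem tailCond_gMul_cons_cons (n : ℕ) (a : ℤ) (x y : ℤ × ZMod k) (l : List (ℤ × ZMod k)) :
    TailCond n (gMul a (x :: y :: l)) ↔ TailCond n (y :: l) := by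
  obtain ⟨m, c⟩ := x
  simp only [gMul]
  split_ifs <;> exact Iff.rfl

theorem tailCond_tMul_cons_cons (n : ℕ) (b : ZMod k) (x y : ℤ × ZMod k) (l : List (ℤ × ZMod k)) :
    TailCond n (tMul b (x :: y :: l)) ↔ TailCond n (y :: l) := by
  obtain ⟨m, c⟩ := x
  simp only [tMul]
  split_ifs <;> exact Iff.rfl

theorem exists_gMul_cons_cons (a : ℤ) {x y : ℤ × ZMod k} {l : List (ℤ × ZMod k)}
    (hl : IsNormal k (x :: y :: l)) : ∃ z, gMul a (x :: y :: l) = z :: y :: l := by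
  obtain ⟨m, c⟩ := x
  simp only [gMul]
  split_ifs with _ hc
  · exact absurd hc (hl.2.1 (List.cons_ne_nil _ _))
  · exact ⟨_, rfl⟩
  · exact ⟨_, rfl⟩

theorem tailCond_singleton_neg_one_add {n : ℕ} {m : ℤ} (hm : m ≠ 1) (c : ZMod k) :
    TailCond n [(-1 + m, c)] ↔ TailCond n [(m, c)] := by
  simp only [TailCond]
  split_ifs <;> first | exact Iff.rfl | omega

theorem tailCond_gMul_neg_one {n : ℕ} (hn : 0 < n) (hnk : n < k) (l : List (ℤ × ZMod k)) :
    TailCond n (gMul (-1) l) ↔ TailCond n l ∧ l ≠ [(1, (n : ZMod k))] := by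
  have : NeZero k := ⟨by omega⟩
  match l with
  | [] => simp [gMul, TailCond]
  | [(m, c)] =>
    by_cases hm : m = 1
    · subst hm
      have hn0 : ((n : ℕ) : ZMod k).val = n := ZMod.val_cast_of_lt hnk
      by_cases hc : c = 0
      · subst hc
        have : (0 : ZMod k) ≠ n := fun h => by rw [← h, ZMod.val_zero] at hn0; omega
        simp [gMul, TailCond, this]
      · have hcn : c = n ↔ c.val = n :=
          ⟨fun h => h ▸ hn0, fun h => ZMod.val_injective k (h.trans hn0.symm)⟩
        simp only [gMul, neg_add_cancel, if_true, hc, if_false, TailCond, false_or,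
          lt_self_iff_false, zero_lt_one, ne_eq, List.cons.injEq, Prod.mk.injEq, true_and,
          and_true, hcn]
        omega
    · simp only [gMul, if_neg (show ¬(-1 + m = 0) by omega), tailCond_singleton_neg_one_add hm]
      simp [hm]
  | x :: y :: l => rw [tailCond_gMul_cons_cons]; simp [TailCond]

theorem tailCond_tMul_one_gMul_neg_one {n : ℕ} (hn : 0 < n) (hnk : n < k)
    {l : List (ℤ × ZMod k)} (hl : IsNormal k l) :
    TailCond n (tMul 1 (gMul (-1) l)) ↔ TailCond n l ∧ l ≠ [(1, 0)] := by
  have : Fact (1 < k) := ⟨by omega⟩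
  match l, hl with
  | [], _ => simp [gMul, tMul, TailCond]
  | [(m, c)], _ =>
    by_cases hm : m = 1
    · subst hm
      by_cases hc : c = 0
      · subst hc
        simp [gMul, tMul, TailCond, ZMod.val_one]
        omega
      have h1c : (1 + c).val = (1 + c.val) % k := by rw [ZMod.val_add, ZMod.val_one]
      rcases (show 1 + c.val < k ∨ 1 + c.val = k by have := ZMod.val_lt c; omega) with hlt | heq
      · rw [Nat.mod_eq_of_lt hlt] at h1c
        have h1c0 : 1 + c ≠ 0 := fun h => by rw [h, ZMod.val_zero] at h1c; omega
        simp [gMul, tMul, hc, h1c0, TailCond, h1c]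
        omega
      · have h1c0 : 1 + c = 0 := by rw [← ZMod.val_eq_zero, h1c, heq, Nat.mod_self]
        simp [gMul, tMul, hc, h1c0, TailCond]
        omega
    · simp only [gMul, if_neg (show ¬(-1 + m = 0) by omega), tMul, if_neg one_ne_zero,
        tailCond_cons_cons, tailCond_singleton_neg_one_add hm]
      simp [hm]
  | x :: y :: l, hl =>
    obtain ⟨z, hz⟩ := exists_gMul_cons_cons (-1) hl
    rw [hz, tailCond_tMul_cons_cons]
    simp [tailCond_cons_cons]

variable (k) in
def canonicalSet (n : ℕ) : Set (Gk k) := {v | TailCond n (normalForm k v).1}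

theorem normalForm_g : (normalForm k (g k)).1 = [(1, 0)] := by
  rw [normalForm, toPerm_g, gPerm_apply_coe]
  simp [NormalWord.nil, gMul]

theorem normalForm_g_mul_t_pow {n : ℕ} (hn : (n : ZMod k) ≠ 0) :
    (normalForm k (g k * t k ^ n)).1 = [(1, (n : ZMod k))] := by
  rw [normalForm_mul, toPerm_g, gPerm_apply_coe, normalForm_t_pow]
  simp [tMul, gMul, hn]

theorem normalForm_inv_g_mul (v : Gk k) :
    (normalForm k ((g k)⁻¹ * v)).1 = gMul (-1) (normalForm k v).1 := by
  rw [normalForm_mul, map_inv, toPerm_g]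
  rfl

theorem normalForm_inv_h_mul (v : Gk k) :
    (normalForm k ((h k)⁻¹ * v)).1 = tMul 1 (gMul (-1) (normalForm k v).1) := by
  rw [normalForm_mul, map_inv, toPerm_h, mul_inv_rev, inv_inv]
  rfl

theorem normalForm_val_injective [NeZero k] : Function.Injective fun v => (normalForm k v).1 :=
  Subtype.val_injective.comp normalForm_injective

section CanonicalSet

variable {n : ℕ} (hn : 0 < n) (hnk : n < k)
include hn hnk

theorem inv_g_mul_mem_canonicalSet (v : Gk k) :
    (g k)⁻¹ * v ∈ canonicalSet k n ↔ v ∈ canonicalSet k n ∧ v ≠ g k * t k ^ n := by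
  have : NeZero k := ⟨by omega⟩
  simp only [canonicalSet, Set.mem_ofPred_eq, normalForm_inv_g_mul,
    tailCond_gMul_neg_one hn hnk (normalForm k v).1,
    ← normalForm_g_mul_t_pow (ZMod.natCast_ne_zero_of_pos_of_lt hn hnk),
    normalForm_val_injective.ne_iff]

theorem inv_h_mul_mem_canonicalSet (v : Gk k) :
    (h k)⁻¹ * v ∈ canonicalSet k n ↔ v ∈ canonicalSet k n ∧ v ≠ g k := by
  have : NeZero k := ⟨by omega⟩
  simp only [canonicalSet, Set.mem_ofPred_eq, normalForm_inv_h_mul,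
    tailCond_tMul_one_gMul_neg_one hn hnk (normalForm k v).2, ← normalForm_g,
    normalForm_val_injective.ne_iff]

theorem isWeakSierpinski_canonicalSet :
    IsWeakSierpinski (g k) (h k) (canonicalSet k n) (g k * t k ^ n) (g k) where
  left_mem := by
    show TailCond n _
    rw [normalForm_g_mul_t_pow (ZMod.natCast_ne_zero_of_pos_of_lt hn hnk)]
    simp [TailCond, ZMod.val_cast_of_lt hnk]
  right_mem := by
    show TailCond n _
    simp [normalForm_g, TailCond]
  left_ne_right := by
    have : NeZero k := ⟨by omega⟩
    rw [Ne, mul_eq_left]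
    exact pow_ne_one_of_lt_orderOf hn.ne' (by rwa [orderOf_t])
  smul_left := by
    ext v
    rw [Set.mem_smul_set_iff_inv_smul_mem, smul_eq_mul, inv_g_mul_mem_canonicalSet hn hnk]
    rfl
  smul_right := by
    ext v
    rw [Set.mem_smul_set_iff_inv_smul_mem, smul_eq_mul, inv_h_mul_mem_canonicalSet hn hnk]
    rfl

end CanonicalSet

theorem eq_of_canonicalSet_eq_image_mul_right {m n : ℕ} (hm : 0 < m) (hmk : m < k) (hn : 0 < n)
    (hnk : n < k) {x : Gk k} (hx : canonicalSet k n = (· * x) '' canonicalSet k m) : m = n := by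
  have : NeZero k := ⟨by omega⟩
  have h := (isWeakSierpinski_canonicalSet hm hmk).mul_inv_eq_of_image_mul_right
    (isWeakSierpinski_canonicalSet hn hnk) hx
  refine pow_injOn_Iio_orderOf ?_ ?_ (mul_left_cancel (mul_right_cancel h)).symm <;>
    rwa [Set.mem_Iio, orderOf_t]

end Gk

open Gk in
/-- In G_k (k ≥ 2), the right multiplication action of G_k on the set of
(g,h)-weak Sierpiński subsets is free and has exactly k − 1 orbits. -/
theorem Gk_right_action_free_orbits (k : ℕ) (hk : 2 ≤ k) :
    (∀ E ∈ wSSets k, ∀ x : Gk k, (· * x) '' E = E → x = 1) ∧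
    ∃ T : Set (Set (Gk k)), T ⊆ wSSets k ∧ T.ncard = k - 1 ∧
      (∀ E ∈ wSSets k, ∃ F ∈ T, ∃ x : Gk k, E = (· * x) '' F) ∧
      (∀ F₁ ∈ T, ∀ F₂ ∈ T, (∃ x : Gk k, F₂ = (· * x) '' F₁) → F₁ = F₂) := by
  have : NeZero k := ⟨by omega⟩
  refine ⟨?_, canonicalSet k '' Set.Ioo 0 k, ?_, ?_, ?_, ?_⟩
  · rintro E hE x hx
    obtain ⟨a, b, hE⟩ := mem_wSSets_iff.1 hE
    exact hE.eq_one_of_image_mul_right_eq hx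
  · rintro _ ⟨n, hn, rfl⟩
    exact mem_wSSets_iff.2 ⟨_, _, isWeakSierpinski_canonicalSet hn.1 hn.2⟩
  · have hinj : Set.InjOn (canonicalSet k) (Set.Ioo 0 k) := fun m hm n hn hmn =>
      eq_of_canonicalSet_eq_image_mul_right hm.1 hm.2 hn.1 hn.2 (x := 1) (by simp [hmn])
    rw [hinj.ncard_image, ← Finset.coe_Ioo, Set.ncard_coe_finset, Nat.card_Ioo, Nat.sub_zero]
  · intro E hE
    obtain ⟨a, b, hE⟩ := mem_wSSets_iff.1 hE
    obtain ⟨n, hn, hnk, hab⟩ := hE.exists_mul_inv_eq_conj_pow (by omega) (t_pow_eq_one k)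
    exact ⟨_, ⟨n, ⟨hn, hnk⟩, rfl⟩, _,
      (isWeakSierpinski_canonicalSet hn hnk).eq_image_mul_right_of_mul_inv_eq (closure_g_h k) hE
        (by rw [hab]; rfl)⟩
  · rintro _ ⟨m, hm, rfl⟩ _ ⟨n, hn, rfl⟩ ⟨x, hx⟩
    rw [eq_of_canonicalSet_eq_image_mul_right hm.1 hm.2 hn.1 hn.2 hx]
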